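/- If A : ℝ → SL(3,ℝ) is a C² solution of A''(t) = Λ(A(t),A'(t))(A(t)⁻¹)ᵀ with Λ(A,A') = tr((A'A⁻¹)²)/tr(A⁻ᵀA⁻¹), then the kinetic energy E_K(t) = (1/2) tr(A'(t)A'(t)ᵀ) is constant in t. -/

import Mathlib

open Matrix Filter Topology
noncomputable section
attribute [local instance] Matrix.normedAddCommGroup Matrix.normedSpace

abbrev M3 := Matrix (Fin 3) (Fin 3) ℝ

/-- The coefficient Λ(A,A') = tr((A'A⁻¹)²)/tr(A⁻ᵀA⁻¹) for incompressible affine motion. -/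
def Lam (A A' : M3) : ℝ :=
  Matrix.trace ((A' * A⁻¹) * (A' * A⁻¹)) / Matrix.trace ((A⁻¹)ᵀ * A⁻¹)

/-!
Write `⟨X, Y⟩ = tr (X Yᵀ)`, so that `E_K = ⟨A', A'⟩ / 2` and `E_K' = ⟨A'', A'⟩`.
By Jacobi's formula the derivative of `det A` is `tr (adj A · A')`, which vanishes because
`det A ≡ 1`: the velocity is tangent to `SL(3, ℝ)`. Since `A⁻¹ = adj A` there, this says
`⟨A⁻ᵀ, A'⟩ = 0`, and the equation of motion makes the acceleration a multiple of `A⁻ᵀ`,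
hence orthogonal to the velocity.
-/

namespace Matrix

variable {𝕜 R E : Type*} [NontriviallyNormedField 𝕜] [NormedCommRing R] [NormedAlgebra 𝕜 R]
  [NormedAddCommGroup E] [NormedSpace 𝕜 E] {m n : Type*} [Fintype n]

theorem hasDerivAt_apply [Fintype m] {A : 𝕜 → Matrix m n E} {D : Matrix m n E} {t : 𝕜}
    (h : HasDerivAt A D t) (i : m) (j : n) : HasDerivAt (fun s => A s i j) (D i j) t :=
  hasDerivAt_pi.mp (hasDerivAt_pi.mp h i) j

omit [NormedAlgebra 𝕜 R] in
theorem det_updateCol_eq_sum [DecidableEq n] (M : Matrix n n R) (i : n) (v : n → R) :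
    (M.updateCol i v).det = ∑ σ : Equiv.Perm n,
      (Equiv.Perm.sign σ : R) * ((∏ j ∈ Finset.univ.erase i, M (σ j) j) * v (σ i)) := by
  rw [det_apply']
  refine Finset.sum_congr rfl fun σ _ => ?_
  rw [← Finset.prod_erase_mul _ _ (Finset.mem_univ i)]
  congr 2
  · exact Finset.prod_congr rfl fun j hj => by simp [Finset.ne_of_mem_erase hj]
  · simp

theorem hasDerivAt_det [DecidableEq n] {A : 𝕜 → Matrix n n R} {D : Matrix n n R} {t : 𝕜}
    (h : HasDerivAt A D t) :
    HasDerivAt (fun s => (A s).det) (trace (adjugate (A t) * D)) t := by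
  have hexp : HasDerivAt (fun s => (A s).det) (∑ σ : Equiv.Perm n, (Equiv.Perm.sign σ : R) *
      ∑ i, (∏ j ∈ Finset.univ.erase i, A t (σ j) j) * D (σ i) i) t := by
    simp_rw [det_apply']
    exact HasDerivAt.fun_sum fun σ _ => (HasDerivAt.fun_finsetProd fun i _ =>
      hasDerivAt_apply h (σ i) i).const_mul _
  convert hexp using 1
  calc trace (adjugate (A t) * D)
      = ∑ i, cramer (A t) (fun k => D k i) i := by
        simp [cramer_eq_adjugate_mulVec, trace, mul_apply, mulVec, dotProduct]
    _ = _ := by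
        simp_rw [cramer_apply, det_updateCol_eq_sum, Finset.mul_sum]
        exact Finset.sum_comm

theorem trace_adjugate_mul_eq_zero_of_det_const [DecidableEq n] {A : 𝕜 → Matrix n n R}
    {D : Matrix n n R} {t : 𝕜} {c : R} (hdet : ∀ s, (A s).det = c) (h : HasDerivAt A D t) :
    trace (adjugate (A t) * D) = 0 :=
  (hasDerivAt_det h).unique (by simpa only [hdet] using hasDerivAt_const t c)

theorem hasDerivAt_trace_mul_transpose_self [Fintype m] {A : 𝕜 → Matrix m n R}
    {D : Matrix m n R} {t : 𝕜} (h : HasDerivAt A D t) :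
    HasDerivAt (fun s => trace (A s * (A s)ᵀ)) (2 * trace (D * (A t)ᵀ)) t := by
  have hsum : ∀ X Y : Matrix m n R, trace (X * Yᵀ) = ∑ i, ∑ j, X i j * Y i j := fun X Y => by
    simp [trace, mul_apply]
  simp_rw [hsum, Finset.mul_sum]
  refine HasDerivAt.fun_sum fun i _ => HasDerivAt.fun_sum fun j _ => ?_
  exact ((hasDerivAt_apply h i j).fun_mul (hasDerivAt_apply h i j)).congr_deriv (by ring)

end Matrix

/-- conservation of kinetic energy for incompressible affine motion. -/
theorem stmt8 (A : ℝ → M3)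
    (hA : ContDiff ℝ 2 A)
    (hdet : ∀ t : ℝ, (A t).det = 1)
    (hODE : ∀ t : ℝ, deriv (deriv A) t = Lam (A t) (deriv A t) • ((A t)⁻¹)ᵀ) :
    ∀ t : ℝ,
      (1/2) * Matrix.trace (deriv A t * (deriv A t)ᵀ)
        = (1/2) * Matrix.trace (deriv A 0 * (deriv A 0)ᵀ) := by
  have hA' : Differentiable ℝ A := hA.differentiable (by norm_num)
  have hA'' : Differentiable ℝ (deriv A) := hA.differentiable_deriv_two
  have hinv : ∀ t, (A t)⁻¹ = adjugate (A t) := fun t => by simp [inv_def, hdet t]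
  have horth : ∀ t, trace (deriv (deriv A) t * (deriv A t)ᵀ) = 0 := fun t => by
    rw [hODE, smul_mul, trace_smul, ← transpose_mul, trace_transpose, trace_mul_comm, hinv]
    exact smul_eq_zero_of_right _ (trace_adjugate_mul_eq_zero_of_det_const hdet (hA' t).hasDerivAt)
  have henergy : ∀ t, HasDerivAt (fun s => trace (deriv A s * (deriv A s)ᵀ)) 0 t := fun t =>
    (hasDerivAt_trace_mul_transpose_self (hA'' t).hasDerivAt).congr_deriv
      (mul_eq_zero_of_right 2 (horth t))
  intro t
  rw [is_const_of_deriv_eq_zero (fun s => (henergy s).differentiableAt)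
    (fun s => (henergy s).deriv) t 0]
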